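/- Let z : Fin K → ℝ (K ≥ 2) be logits with a unique maximizer. Then the confidence S(z, T) = q^{(ŷ)}(z, T) is strictly decreasing in T on (0, ∞), and S(z, T) > 1/K for every T > 0. -/

import Mathlib

/-!
Dividing numerator and denominator by `exp (z ŷ / T)` writes the confidence as `1 / D T` with
`D T = ∑ j, exp ((z j - z ŷ) / T)`. The term `j = ŷ` of `D` is `1`, every other exponent is negative,
so each other term lies in `(0, 1)` and increases strictly with `T`. Hence `D` is strictly
increasing and `D T < K`, which gives both claims.
-/

open Finset Real

lemma monotoneOn_exp_div_of_nonpos {a : ℝ} (ha : a ≤ 0) :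
    MonotoneOn (fun T : ℝ => exp (a / T)) (Set.Ioi 0) := fun _ hT₁ _ _ h =>
  exp_le_exp.2 <| neg_le_neg_iff.1 <| by
    simpa only [neg_div] using div_le_div_of_nonneg_left (neg_nonneg.2 ha) hT₁ h

lemma strictMonoOn_exp_div_of_neg {a : ℝ} (ha : a < 0) :
    StrictMonoOn (fun T : ℝ => exp (a / T)) (Set.Ioi 0) := fun _ hT₁ _ _ h =>
  exp_lt_exp.2 <| neg_lt_neg_iff.1 <| by
    simpa only [neg_div] using div_lt_div_of_pos_left (neg_pos.2 ha) hT₁ h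

section Softmax

variable {ι : Type*} [Fintype ι]

lemma exp_div_div_sum_exp_eq_inv (z : ι → ℝ) (i : ι) (T : ℝ) :
    exp (z i / T) / ∑ j, exp (z j / T) = (∑ j, exp ((z j - z i) / T))⁻¹ := by
  simp_rw [sub_div, exp_sub, ← sum_div, inv_div]

lemma sum_exp_sub_div_pos (z : ι → ℝ) (i : ι) (T : ℝ) : 0 < ∑ j, exp ((z j - z i) / T) :=
  sum_pos (fun _ _ => exp_pos _) ⟨i, mem_univ i⟩

variable [Nontrivial ι] {z : ι → ℝ} {i : ι}

lemma strictMonoOn_sum_exp_sub_div (hmax : ∀ j, j ≠ i → z j < z i) :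
    StrictMonoOn (fun T => ∑ j, exp ((z j - z i) / T)) (Set.Ioi 0) := by
  intro T₁ hT₁ T₂ hT₂ h
  obtain ⟨j₀, hj₀⟩ := exists_ne i
  refine sum_lt_sum (fun j _ => ?_) ⟨j₀, mem_univ _, ?_⟩
  · rcases eq_or_ne j i with rfl | hj
    · simp only [sub_self, zero_div, le_refl]
    · exact monotoneOn_exp_div_of_nonpos (sub_nonpos.2 (hmax j hj).le) hT₁ hT₂ h.le
  · exact strictMonoOn_exp_div_of_neg (sub_neg.2 (hmax j₀ hj₀)) hT₁ hT₂ h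

lemma sum_exp_sub_div_lt_card (hmax : ∀ j, j ≠ i → z j < z i) {T : ℝ} (hT : 0 < T) :
    ∑ j, exp ((z j - z i) / T) < Fintype.card ι := by
  obtain ⟨j₀, hj₀⟩ := exists_ne i
  rw [Fintype.card_eq_sum_ones, Nat.cast_sum, Nat.cast_one]
  refine sum_lt_sum (fun j _ => ?_) ⟨j₀, mem_univ _, ?_⟩
  · rcases eq_or_ne j i with rfl | hj
    · simp only [sub_self, zero_div, exp_zero, le_refl]
    · exact exp_le_one_iff.2 (div_nonpos_of_nonpos_of_nonneg (sub_nonpos.2 (hmax j hj).le) hT.le)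
  · exact exp_lt_one_iff.2 (div_neg_of_neg_of_pos (sub_neg.2 (hmax j₀ hj₀)) hT)

end Softmax

theorem confidence_strictAnti_and_gt_inv_K (K : ℕ) (hK : 2 ≤ K) (z : Fin K → ℝ)
    (yhat : Fin K) (hmax : ∀ j : Fin K, j ≠ yhat → z j < z yhat) :
    StrictAntiOn (fun T : ℝ => Real.exp (z yhat / T) / ∑ j : Fin K, Real.exp (z j / T))
      (Set.Ioi (0 : ℝ)) ∧
    ∀ T : ℝ, 0 < T →
      (1 : ℝ) / K < Real.exp (z yhat / T) / ∑ j : Fin K, Real.exp (z j / T) := by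
  have : Nontrivial (Fin K) := Fin.nontrivial_iff_two_le.2 hK
  simp only [exp_div_div_sum_exp_eq_inv]
  refine ⟨fun T₁ hT₁ T₂ hT₂ h => ?_, fun T hT => ?_⟩
  · exact (inv_lt_inv₀ (sum_exp_sub_div_pos z yhat T₂) (sum_exp_sub_div_pos z yhat T₁)).2
      (strictMonoOn_sum_exp_sub_div hmax hT₁ hT₂ h)
  · rw [one_div, inv_lt_inv₀ (by positivity) (sum_exp_sub_div_pos z yhat T)]
    simpa only [Fintype.card_fin] using sum_exp_sub_div_lt_card hmax hT
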